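/- arXiv:1911.10294 — 5 statements merged into one kernel-verified Lean document; each statement's English description precedes it below -/
import Mathlib

section
/- Let A and B be n×n real matrices and t ∈ ℝ. Then the ordered products Pₙ = ∏_{i=0}^{n−1} exp((it/n)A) · exp((t/n)B) · exp(−(it/n)A) (the factor with i = 0 leftmost, i increasing to the right) converge, as n → ∞, to exp(t(A + B)) · exp(−tA). (This is the general solution formula φ_t(u,e) = lim_{n→∞} ∏_{i=0}^{n−1} φ_{it/n}(exp((t/n)·Σⱼ uⱼYⱼ)) for a linear control system, specialized to the inner-derivation/matrix case where the flow of the linear vector field is φ_r(g) = exp(rA)·g·exp(−rA) and B = Σⱼ uⱼBⱼ.) -/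
attribute [local instance] Matrix.linftyOpNormedRing Matrix.linftyOpNormedAlgebra

open NormedSpace Filter

set_option linter.unusedSectionVars false

section AuxTrotter


variable {𝔸 : Type*} [NormedRing 𝔸] [NormedAlgebra ℝ 𝔸] [CompleteSpace 𝔸] [NormOneClass 𝔸]

lemma myexp_norm_le (x : 𝔸) : ‖exp x‖ ≤ Real.exp ‖x‖ := by
  rw [Real.exp_eq_exp_ℝ]
  calc ‖exp x‖ ≤ ∑' n : ℕ, ‖((n.factorial :ℝ)⁻¹) • x ^ n‖ := by
        rw [exp_eq_tsum ℝ]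
        exact norm_tsum_le_tsum_norm (norm_expSeries_summable' x)
    _ ≤ ∑' n : ℕ, ((n.factorial : ℝ)⁻¹) • ‖x‖ ^ n := by
        refine Summable.tsum_le_tsum (fun n => ?_) (norm_expSeries_summable' x)
          (expSeries_summable' (𝕂 := ℝ) ‖x‖)
        rw [norm_smul, smul_eq_mul, Real.norm_eq_abs, abs_of_nonneg (by positivity)]
        exact mul_le_mul_of_nonneg_left (norm_pow_le x n) (by positivity)
    _ = exp ‖x‖ := by rw [exp_eq_tsum ℝ]

lemma myexp_remainder (x : 𝔸) : ‖exp x - 1 - x‖ ≤ ‖x‖ ^ 2 * Real.exp ‖x‖ := by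
  set f : ℕ → 𝔸 := fun n => ((n.factorial : ℝ)⁻¹) • x ^ n with hf
  have hs : Summable f := expSeries_summable' (𝕂 := ℝ) x
  have hs1 : Summable fun n => f (n + 1) := (summable_nat_add_iff 1).2 hs
  have hs2 : Summable fun n => f (n + 2) := (summable_nat_add_iff 2).2 hs
  have hexp : exp x = f 0 + (f 1 + ∑' n, f (n + 2)) := by
    rw [show exp x = ∑' n, f n from congrFun (exp_eq_tsum ℝ) x, Summable.tsum_eq_zero_add hs,
      Summable.tsum_eq_zero_add hs1]
  have hf0 : f 0 = 1 := by simp [hf]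
  have hf1 : f 1 = x := by simp [hf]
  have key : exp x - 1 - x = ∑' n, f (n + 2) := by
    rw [hexp, hf0, hf1]; abel
  rw [key]
  have hmaj : ∀ n : ℕ, ‖f (n + 2)‖ ≤ (((n.factorial : ℝ)⁻¹) * ‖x‖ ^ n) * ‖x‖ ^ 2 := by
    intro n
    rw [hf, norm_smul, Real.norm_eq_abs, abs_of_nonneg (by positivity)]
    calc ((n + 2).factorial : ℝ)⁻¹ * ‖x ^ (n + 2)‖
        ≤ ((n.factorial : ℝ)⁻¹) * ‖x‖ ^ (n + 2) := by
          refine mul_le_mul ?_ (norm_pow_le x (n + 2)) (norm_nonneg _) (by positivity)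
          refine inv_anti₀ (by positivity) ?_
          exact_mod_cast Nat.factorial_le (by omega)
      _ = (((n.factorial : ℝ)⁻¹) * ‖x‖ ^ n) * ‖x‖ ^ 2 := by ring
  have hsum : Summable fun n : ℕ => (((n.factorial : ℝ)⁻¹) * ‖x‖ ^ n) * ‖x‖ ^ 2 := by
    have := (expSeries_summable' (𝕂 := ℝ) ‖x‖)
    simpa [smul_eq_mul] using this.mul_right (‖x‖ ^ 2)
  calc ‖∑' n, f (n + 2)‖ ≤ ∑' n, ‖f (n + 2)‖ := by
        refine norm_tsum_le_tsum_norm ?_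
        exact Summable.of_nonneg_of_le (fun n => norm_nonneg _) hmaj hsum
    _ ≤ ∑' n : ℕ, (((n.factorial : ℝ)⁻¹) * ‖x‖ ^ n) * ‖x‖ ^ 2 := by
        refine Summable.tsum_le_tsum hmaj ?_ hsum
        exact Summable.of_nonneg_of_le (fun n => norm_nonneg _) hmaj hsum
    _ = ‖x‖ ^ 2 * Real.exp ‖x‖ := by
        rw [tsum_mul_right, Real.exp_eq_exp_ℝ, exp_eq_tsum ℝ, mul_comm]
        simp [smul_eq_mul]

lemma mypow_sub_pow (u v : 𝔸) (K ε : ℝ) (hu : ‖u‖ ≤ K) (hv : ‖v‖ ≤ K)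
    (huv : ‖u - v‖ ≤ ε) : ∀ n : ℕ, ‖u ^ (n + 1) - v ^ (n + 1)‖ ≤ (n + 1) * K ^ n * ε := by
  have hK : (0:ℝ) ≤ K := le_trans (norm_nonneg u) hu
  have hε : (0:ℝ) ≤ ε := le_trans (norm_nonneg _) huv
  intro n
  induction n with
  | zero => simpa using huv
  | succ n ih =>
    have hid : u ^ (n + 2) - v ^ (n + 2) = u ^ (n + 1) * (u - v) + (u ^ (n + 1) - v ^ (n + 1)) * v := by
      rw [pow_succ u (n+1), pow_succ v (n+1)]
      noncomm_ring
    rw [hid]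
    calc ‖u ^ (n + 1) * (u - v) + (u ^ (n + 1) - v ^ (n + 1)) * v‖
        ≤ ‖u ^ (n + 1) * (u - v)‖ + ‖(u ^ (n + 1) - v ^ (n + 1)) * v‖ := norm_add_le _ _
      _ ≤ ‖u ^ (n + 1)‖ * ‖u - v‖ + ‖u ^ (n + 1) - v ^ (n + 1)‖ * ‖v‖ :=
          add_le_add (norm_mul_le _ _) (norm_mul_le _ _)
      _ ≤ K ^ (n + 1) * ε + ((n + 1) * K ^ n * ε) * K := by
          refine add_le_add ?_ ?_
          · exact mul_le_mul (le_trans (norm_pow_le u (n+1)) (pow_le_pow_left₀ (norm_nonneg u) hu _)) huv (norm_nonneg _) (by positivity)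
          · exact mul_le_mul ih hv (norm_nonneg _) (by positivity)
      _ = (↑(n + 1) + 1) * K ^ (n + 1) * ε := by push_cast; ring


lemma mytrotter (X Y : 𝔸) :
    Tendsto (fun n : ℕ => (exp ((1 / (n : ℝ)) • X) * exp ((1 / (n : ℝ)) • Y)) ^ n) atTop
      (nhds (exp (X + Y))) := by
  set a : ℝ := ‖X‖ + ‖Y‖ + 1 with ha
  have ha0 : (0:ℝ) < a := by positivity
  set D : ℝ := 1 + (1 + a) * Real.exp a + Real.exp a * Real.exp a + Real.exp a with hD
  have hD0 : (0:ℝ) ≤ D := by positivity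
  set C : ℝ := Real.exp (2 * a) * (a ^ 2 * D) with hC
  rw [tendsto_iff_norm_sub_tendsto_zero]
  refine squeeze_zero' (Eventually.of_forall fun n => norm_nonneg _) ?_
    (tendsto_const_div_atTop_nhds_zero_nat C)
  rw [eventually_atTop]
  refine ⟨1, fun n hn => ?_⟩
  have hn0 : (0:ℝ) < (n:ℝ) := by exact_mod_cast hn
  have hnne : (n:ℝ) ≠ 0 := ne_of_gt hn0
  set c : ℝ := a / n with hc
  have hc0 : (0:ℝ) ≤ c := by positivity
  have hca : c ≤ a := by
    rw [hc]
    exact div_le_self ha0.le (by exact_mod_cast hn)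
  set x : 𝔸 := (1 / (n : ℝ)) • X with hxdef
  set y : 𝔸 := (1 / (n : ℝ)) • Y with hydef
  have hx : ‖x‖ ≤ c := by
    rw [hxdef, norm_smul, Real.norm_eq_abs, abs_of_nonneg (by positivity), hc]
    rw [div_eq_mul_inv, one_mul, div_eq_mul_inv, mul_comm (a)]
    exact mul_le_mul_of_nonneg_left (by rw [ha]; linarith [norm_nonneg Y]) (by positivity)
  have hy : ‖y‖ ≤ c := by
    rw [hydef, norm_smul, Real.norm_eq_abs, abs_of_nonneg (by positivity), hc]
    rw [div_eq_mul_inv, one_mul, div_eq_mul_inv, mul_comm (a)]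
    exact mul_le_mul_of_nonneg_left (by rw [ha]; linarith [norm_nonneg X]) (by positivity)
  have hxy : ‖x + y‖ ≤ c := by
    refine le_trans (norm_add_le x y) ?_
    rw [hxdef, hydef, norm_smul, norm_smul, Real.norm_eq_abs, abs_of_nonneg (by positivity), hc]
    rw [← mul_add, div_eq_mul_inv, one_mul, div_eq_mul_inv, mul_comm (a)]
    exact mul_le_mul_of_nonneg_left (by rw [ha]; linarith) (by positivity)
  set S : 𝔸 := exp (x + y) with hSdef
  set T : 𝔸 := exp x * exp y with hTdef
  have hTS : T - S = x * y + (1 + x) * (exp y - 1 - y) + (exp x - 1 - x) * exp y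
      - (exp (x + y) - 1 - (x + y)) := by
    rw [hTdef, hSdef]; noncomm_ring
  have hec : Real.exp ‖x‖ ≤ Real.exp c := Real.exp_le_exp.2 hx
  have hecy : Real.exp ‖y‖ ≤ Real.exp c := Real.exp_le_exp.2 hy
  have hecxy : Real.exp ‖x + y‖ ≤ Real.exp c := Real.exp_le_exp.2 hxy
  have hrem : ∀ z : 𝔸, ‖z‖ ≤ c → ‖exp z - 1 - z‖ ≤ c ^ 2 * Real.exp c := by
    intro z hz
    refine le_trans (myexp_remainder z) ?_
    have hze := Real.exp_le_exp.2 hz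
    gcongr
  have hTSnorm : ‖T - S‖ ≤ c ^ 2 * D := by
    have h4 : ∀ p q r s : 𝔸, ‖p + q + r - s‖ ≤ ‖p‖ + ‖q‖ + ‖r‖ + ‖s‖ := by
      intro p q r s
      calc ‖p + q + r - s‖ ≤ ‖p + q + r‖ + ‖s‖ := norm_sub_le _ _
        _ ≤ ‖p + q‖ + ‖r‖ + ‖s‖ := by gcongr; exact norm_add_le _ _
        _ ≤ ‖p‖ + ‖q‖ + ‖r‖ + ‖s‖ := by gcongr; exact norm_add_le _ _
    rw [hTS]
    refine le_trans (h4 _ _ _ _) ?_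
    have hp : ‖x * y‖ ≤ c * c :=
      le_trans (norm_mul_le _ _) (mul_le_mul hx hy (norm_nonneg _) hc0)
    have hq : ‖(1 + x) * (exp y - 1 - y)‖ ≤ (1 + c) * (c ^ 2 * Real.exp c) := by
      refine le_trans (norm_mul_le _ _) (mul_le_mul ?_ (hrem y hy) (norm_nonneg _) (by positivity))
      refine le_trans (norm_add_le _ _) ?_
      rw [norm_one]
      linarith
    have hr : ‖(exp x - 1 - x) * exp y‖ ≤ (c ^ 2 * Real.exp c) * Real.exp c := by
      refine le_trans (norm_mul_le _ _) (mul_le_mul (hrem x hx) ?_ (norm_nonneg _) (by positivity))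
      exact le_trans (myexp_norm_le y) hecy
    have hs : ‖exp (x + y) - 1 - (x + y)‖ ≤ c ^ 2 * Real.exp c := hrem _ hxy
    have hcD : c * c + (1 + c) * (c ^ 2 * Real.exp c) + (c ^ 2 * Real.exp c) * Real.exp c
        + c ^ 2 * Real.exp c ≤ c ^ 2 * D := by
      have h1 : Real.exp c ≤ Real.exp a := Real.exp_le_exp.2 hca
      calc c * c + (1 + c) * (c ^ 2 * Real.exp c) + (c ^ 2 * Real.exp c) * Real.exp c
            + c ^ 2 * Real.exp c
          = c ^ 2 * (1 + (1 + c) * Real.exp c + Real.exp c * Real.exp c + Real.exp c) := by ring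
        _ ≤ c ^ 2 * (1 + (1 + a) * Real.exp a + Real.exp a * Real.exp a + Real.exp a) := by gcongr
        _ = c ^ 2 * D := by rw [hD]
    linarith [hp, hq, hr, hs, hcD]
  set K : ℝ := Real.exp c * Real.exp c with hK
  have hTK : ‖T‖ ≤ K := by
    rw [hTdef, hK]
    exact le_trans (norm_mul_le _ _)
      (mul_le_mul (le_trans (myexp_norm_le x) hec) (le_trans (myexp_norm_le y) hecy)
        (norm_nonneg _) (Real.exp_pos c).le)
  have hSK : ‖S‖ ≤ K := by
    rw [hSdef, hK]
    refine le_trans (le_trans (myexp_norm_le _) hecxy) ?_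
    exact le_mul_of_one_le_left (Real.exp_pos c).le (Real.one_le_exp hc0)
  obtain ⟨m, rfl⟩ : ∃ m, n = m + 1 := ⟨n - 1, by omega⟩
  have hSn : S ^ (m + 1) = exp (X + Y) := by
    let +nondep : NormedAlgebra ℚ 𝔸 := .restrictScalars ℚ ℝ 𝔸
    rw [hSdef, ← exp_nsmul]
    congr 1
    rw [hxdef, hydef, ← smul_add, ← Nat.cast_smul_eq_nsmul ℝ, smul_smul]
    rw [mul_one_div, div_self hnne, one_smul]
  have hbound := mypow_sub_pow T S K (c ^ 2 * D) hTK hSK hTSnorm m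
  rw [← hSn]
  refine le_trans hbound ?_
  have hKm : K ^ m ≤ Real.exp (2 * a) := by
    rw [hK, ← Real.exp_add, ← Real.exp_nat_mul]
    refine Real.exp_le_exp.2 ?_
    have hm : (m:ℝ) ≤ (m:ℝ) + 1 := by linarith
    calc (m:ℝ) * (c + c) ≤ ((m:ℝ) + 1) * (c + c) := by
          exact mul_le_mul_of_nonneg_right hm (by positivity)
      _ = 2 * a := by
          rw [hc]
          push_cast
          field_simp
          ring
  calc ((m:ℝ) + 1) * K ^ m * (c ^ 2 * D) ≤ ((m:ℝ) + 1) * Real.exp (2 * a) * (c ^ 2 * D) := by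
        gcongr
    _ = C / (↑(m + 1)) := by
        rw [hC, hc]
        push_cast
        field_simp


lemma mulhelp {M : Type*} [Monoid M] (P q r u v w : M) (h1 : v * u = 1) (h2 : r * w = v) :
    P * v * (u * q * v) = P * (q * r) * w := by
  calc P * v * (u * q * v) = P * (v * u) * (q * v) := by simp [mul_assoc]
    _ = P * (q * v) := by rw [h1, mul_one]
    _ = P * (q * (r * w)) := by rw [h2]
    _ = P * (q * r) * w := by simp [mul_assoc]

lemma mytelescope (A B : 𝔸) (c : ℝ) : ∀ n : ℕ,
    ((List.range n).map (fun i : ℕ =>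
      exp (((i : ℝ) * c) • A) * exp (c • B) * exp (-(((i : ℝ) * c) • A)))).prod
    = (exp (c • B) * exp (c • A)) ^ n * exp (-(((n : ℝ) * c) • A)) := by
  have hmulA : ∀ s r : ℝ, exp (s • A) * exp (r • A) = exp ((s + r) • A) := fun s r => by
    let +nondep : NormedAlgebra ℚ 𝔸 := .restrictScalars ℚ ℝ 𝔸
    rw [add_smul]
    exact (exp_add_of_commute (((Commute.refl A).smul_left s).smul_right r)).symm
  intro n
  induction n with
  | zero => simp
  | succ n ih =>
    have h1 : exp (-(((n : ℝ) * c) • A)) * exp (((n : ℝ) * c) • A) = 1 := by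
      rw [← neg_smul, hmulA]
      simp
    have h2 : exp (c • A) * exp (-((((n : ℝ) + 1) * c) • A)) = exp (-(((n : ℝ) * c) • A)) := by
      rw [← neg_smul, ← neg_smul, hmulA]
      exact congrArg exp (by module)
    rw [List.range_succ, List.map_append, List.prod_append, ih, List.map_singleton,
      List.prod_singleton, pow_succ]
    push_cast
    exact mulhelp _ _ _ _ _ _ h1 h2

end AuxTrotter

/-- The ordered products `∏_{i=0}^{n-1} exp((it/n) A) * exp((t/n) B) * exp(-(it/n) A)`
converge, as `n → ∞`, to `exp(t (A + B)) * exp(-t A)`.  This is the general solution formula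
for a linear control system, specialized to the inner-derivation/matrix case. -/
theorem linear_control_solution_as_lie_product_limit
    (d : ℕ) (A B : Matrix (Fin d) (Fin d) ℝ) (t : ℝ) :
    Tendsto
      (fun n : ℕ =>
        ((List.range n).map (fun i : ℕ =>
          exp ((((i : ℝ) * t) / n) • A) * exp ((t / n) • B) *
            exp (-((((i : ℝ) * t) / n) • A)))).prod)
      atTop (nhds (exp (t • (A + B)) * exp (-(t • A)))) := by
  rcases isEmpty_or_nonempty (Fin d) with h | h
  · haveI : Unique (Matrix (Fin d) (Fin d) ℝ) := Pi.uniqueOfIsEmpty _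
    have heq : (fun n : ℕ =>
        ((List.range n).map (fun i : ℕ =>
          exp ((((i : ℝ) * t) / n) • A) * exp ((t / n) • B) *
            exp (-((((i : ℝ) * t) / n) • A)))).prod)
        = fun _ : ℕ => exp (t • (A + B)) * exp (-(t • A)) :=
      funext fun n => Subsingleton.elim _ _
    rw [heq]
    exact tendsto_const_nhds
  · haveI : NormOneClass (Matrix (Fin d) (Fin d) ℝ) := Matrix.linfty_opNormOneClass
    have key := (mytrotter (t • B) (t • A)).mul_const (exp (-(t • A)))
    rw [show t • B + t • A = t • (A + B) by rw [smul_add, add_comm]] at key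
    refine Tendsto.congr' ?_ key
    rw [EventuallyEq, eventually_atTop]
    refine ⟨1, fun n hn => ?_⟩
    have hnne : (n : ℝ) ≠ 0 := by
      have : (0:ℝ) < n := by exact_mod_cast hn
      exact ne_of_gt this
    simp only [mul_div_assoc]
    erw [mytelescope A B (t / (n : ℝ)) n]
    rw [show (n : ℝ) * (t / n) = t by rw [mul_comm]; exact div_mul_cancel₀ t hnne,
      show (1 / (n:ℝ)) • (t • B) = (t / (n:ℝ)) • B by rw [smul_smul, one_div, inv_mul_eq_div],
      show (1 / (n:ℝ)) • (t • A) = (t / (n:ℝ)) • A by rw [smul_smul, one_div, inv_mul_eq_div]]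
    rfl
end

section
/- Let L be a Lie algebra over ℝ, x ∈ L, and Y₁, …, Y_m ∈ L. Let 𝔥 be the Lie subalgebra of L generated by the set {(ad x)ⁿ(Yⱼ) : 1 ≤ j ≤ m, n ∈ ℕ}, where ad x : L → L is z ↦ [x, z]. Then the Lie subalgebra of L generated by {x, Y₁, …, Y_m} equals, as a linear subspace, the sum ℝ·x + 𝔥 of the line spanned by x and the underlying subspace of 𝔥. -/
/-! The iterates `(ad x)ⁿ Yⱼ` form an `ad x`-stable set, so by the Leibniz rule `x` normalises the
Lie subalgebra `𝔥` they generate. Then `ℝ x + 𝔥` is closed under the bracket, hence is the Lie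
subalgebra generated by `x` and `𝔥`, which is also the one generated by `x` and the `Yⱼ`. -/

namespace LieSubalgebra

variable {R L : Type*} [CommRing R] [LieRing L] [LieAlgebra R L]

theorem mem_normalizer_lieSpan_of_lie_mem {s : Set L} {x : L}
    (hs : ∀ y ∈ s, ⁅x, y⁆ ∈ lieSpan R L s) : x ∈ (lieSpan R L s).normalizer := by
  rw [mem_normalizer_iff]
  intro y hy
  induction hy using lieSpan_induction with
  | mem y hy => exact hs y hy
  | zero => simpa only [lie_zero] using zero_mem _
  | add y z _ _ hxy hxz => simpa only [lie_add] using add_mem hxy hxz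
  | smul c y _ hxy => simpa only [lie_smul] using (lieSpan R L s).smul_mem c hxy
  | lie y z hy hz hxy hxz =>
    rw [leibniz_lie]
    exact add_mem (lie_mem _ hxy hz) (lie_mem _ hy hxz)

theorem toSubmodule_lieSpan_insert_of_mem_normalizer {H : LieSubalgebra R L} {x : L}
    (hx : x ∈ H.normalizer) :
    (lieSpan R L (insert x (H : Set L))).toSubmodule = R ∙ x ⊔ H.toSubmodule := by
  let K : LieSubalgebra R L :=
    { R ∙ x ⊔ H.toSubmodule with lie_mem' := lie_mem_sup_of_mem_normalizer hx }
  apply le_antisymm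
  · change lieSpan R L _ ≤ K
    rw [lieSpan_le, Set.insert_subset_iff]
    exact ⟨Submodule.mem_sup_left (Submodule.mem_span_singleton_self x),
      fun y hy ↦ Submodule.mem_sup_right hy⟩
  · refine sup_le ((Submodule.span_singleton_le_iff_mem _ _).mpr ?_) ?_
    · exact subset_lieSpan (Set.mem_insert x _)
    · exact fun y hy ↦ subset_lieSpan (Set.mem_insert_of_mem x hy)

theorem ad_pow_apply_mem {K : LieSubalgebra R L} {x y : L} (hx : x ∈ K) (hy : y ∈ K) (n : ℕ) :
    (LieAlgebra.ad R L x ^ n) y ∈ K := by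
  induction n with
  | zero => exact hy
  | succ n ih =>
    rw [pow_succ', Module.End.mul_apply]
    exact K.lie_mem hx ih

end LieSubalgebra

open LieSubalgebra in
/-- Decomposition `ℒ = ℝ·x + 𝔥` of the system algebra of a linear control system with inner
derivation `ad x`: the Lie subalgebra generated by `{x, Y₁, …, Y_m}` equals, as a linear
subspace, the sum of the line spanned by `x` and the Lie subalgebra `𝔥` generated by the
iterates `(ad x)ⁿ (Yⱼ)`. -/
theorem lieSpan_insert_eq_span_sup_lieSpan_ad_iterates
    (L : Type*) [LieRing L] [LieAlgebra ℝ L] (x : L) (m : ℕ) (Y : Fin m → L)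
    (𝔥 : LieSubalgebra ℝ L)
    (h𝔥 : 𝔥 = LieSubalgebra.lieSpan ℝ L
      {z : L | ∃ j : Fin m, ∃ n : ℕ, ((LieAlgebra.ad ℝ L x) ^ n) (Y j) = z}) :
    (LieSubalgebra.lieSpan ℝ L (insert x (Set.range Y))).toSubmodule =
      Submodule.span ℝ {x} ⊔ 𝔥.toSubmodule := by
  set s := {z : L | ∃ j : Fin m, ∃ n : ℕ, ((LieAlgebra.ad ℝ L x) ^ n) (Y j) = z}
  have hs : ∀ z ∈ s, ⁅x, z⁆ ∈ lieSpan ℝ L s := by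
    rintro _ ⟨j, n, rfl⟩
    exact subset_lieSpan ⟨j, n + 1, by rw [pow_succ', Module.End.mul_apply]; rfl⟩
  have hY : Set.range Y ⊆ s := by
    rintro _ ⟨j, rfl⟩
    exact ⟨j, 0, rfl⟩
  have hsY : s ⊆ lieSpan ℝ L (insert x (Set.range Y)) := by
    rintro _ ⟨j, n, rfl⟩
    exact ad_pow_apply_mem (subset_lieSpan (Set.mem_insert x _))
      (subset_lieSpan (Set.mem_insert_of_mem x (Set.mem_range_self j))) n
  subst h𝔥
  rw [← toSubmodule_lieSpan_insert_of_mem_normalizer (mem_normalizer_lieSpan_of_lie_mem hs)]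
  congr 1
  refine le_antisymm (lieSpan_mono (Set.insert_subset_insert (hY.trans subset_lieSpan))) ?_
  rw [lieSpan_le, Set.insert_subset_iff]
  exact ⟨subset_lieSpan (Set.mem_insert x _), lieSpan_le.mpr hsY⟩
end

section
/- Let Z be a 3×3 real matrix and λ a nonzero real number such that Z³ = λ²·Z. Then for every t ∈ ℝ, exp(tZ) = I + (sinh(tλ)/λ)·Z + ((cosh(tλ) − 1)/λ²)·Z², where I is the 3×3 identity matrix. -/
attribute [local instance] Matrix.linftyOpNormedRing Matrix.linftyOpNormedAlgebra

open NormedSpace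
open scoped Nat

private lemma Zpow_odd {Z : Matrix (Fin 3) (Fin 3) ℝ} {l : ℝ}
    (hZ : Z ^ 3 = l ^ 2 • Z) (k : ℕ) : Z ^ (2 * k + 1) = (l ^ (2 * k)) • Z := by
  induction k with
  | zero => simp
  | succ k ih =>
    have h : 2 * (k + 1) + 1 = (2 * k + 1) + 2 := by ring
    rw [h, pow_add, ih, Matrix.smul_mul, ← pow_succ' Z 2, hZ, smul_smul, ← pow_add]
    ring_nf

private lemma Zpow_even {Z : Matrix (Fin 3) (Fin 3) ℝ} {l : ℝ}
    (hZ : Z ^ 3 = l ^ 2 • Z) (k : ℕ) : Z ^ (2 * k + 2) = (l ^ (2 * k)) • Z ^ 2 := by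
  have h : 2 * k + 2 = (2 * k + 1) + 1 := by ring
  rw [h, pow_succ, Zpow_odd hZ, Matrix.smul_mul, ← sq]

/-- For a `3 × 3` real matrix `Z` with `Z³ = λ²·Z` (`λ ≠ 0`), one has
`exp(tZ) = I + (sinh(tλ)/λ)·Z + ((cosh(tλ) - 1)/λ²)·Z²`; such `Z` are the elements of
`𝔰𝔬(2,1)`, with eigenvalues `0, λ, -λ`. -/
theorem exp_so21_type_matrix
    (Z : Matrix (Fin 3) (Fin 3) ℝ) (l : ℝ) (hl : l ≠ 0)
    (hZ : Z ^ 3 = l ^ 2 • Z) :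
    ∀ t : ℝ, exp (t • Z) =
      (1 : Matrix (Fin 3) (Fin 3) ℝ) + (Real.sinh (t * l) / l) • Z +
        ((Real.cosh (t * l) - 1) / l ^ 2) • Z ^ 2 := by
  intro t
  set x : ℝ := t * l with hx
  -- scalar series
  have h1 : HasSum (fun n => x ^ n / n !) (Real.exp x) := by
    rw [Real.exp_eq_exp_ℝ]; exact expSeries_div_hasSum_exp x
  have h2 : HasSum (fun n => (-x) ^ n / n !) (Real.exp (-x)) := by
    rw [Real.exp_eq_exp_ℝ]; exact expSeries_div_hasSum_exp (-x)
  have hodd : HasSum (fun n => if Odd n then x ^ n / n ! else 0) (Real.sinh x) := by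
    have := (h1.sub h2).div_const 2
    rw [Real.sinh_eq]
    convert this using 2 with n
    · rfl
    rcases Nat.even_or_odd n with he | ho
    · rw [if_neg (by simpa [Nat.not_odd_iff_even] using he), he.neg_pow]
      ring
    · rw [if_pos ho, ho.neg_pow]
      ring
  have heven : HasSum (fun n => if Even n ∧ n ≠ 0 then x ^ n / n ! else 0)
      (Real.cosh x - 1) := by
    have hc : HasSum (fun n => if Even n then x ^ n / n ! else 0) (Real.cosh x) := by
      have := (h1.add h2).div_const 2
      rw [Real.cosh_eq]
      convert this using 2 with n
      · rfl
      rcases Nat.even_or_odd n with he | ho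
      · rw [if_pos he, he.neg_pow]; ring
      · rw [if_neg (Nat.not_even_iff_odd.mpr ho), ho.neg_pow]; ring
    have h0 : HasSum (fun n : ℕ => if n = 0 then (1 : ℝ) else 0) 1 := by
      simpa using hasSum_ite_eq (0 : ℕ) (1 : ℝ)
    convert hc.sub h0 using 2 with n
    · rfl
    rcases eq_or_ne n 0 with rfl | hn
    · simp
    · rcases Nat.even_or_odd n with he | ho
      · simp [he, hn]
      · simp [Nat.not_even_iff_odd.mpr ho, hn]
  -- matrix series
  have hmat : HasSum (fun n => ((n !)⁻¹ : ℝ) • (t • Z) ^ n) (exp (t • Z)) :=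
    exp_series_hasSum_exp' (t • Z)
  have hrhs : HasSum (fun n => ((n !)⁻¹ : ℝ) • (t • Z) ^ n)
      ((1 : Matrix (Fin 3) (Fin 3) ℝ) + (Real.sinh x / l) • Z +
        ((Real.cosh x - 1) / l ^ 2) • Z ^ 2) := by
    have hA : HasSum (fun n : ℕ => (if n = 0 then (1 : ℝ) else 0) • (1 : Matrix (Fin 3) (Fin 3) ℝ)) 1 := by
      simpa using (hasSum_ite_eq (0 : ℕ) (1 : ℝ)).smul_const (1 : Matrix (Fin 3) (Fin 3) ℝ)
    have hB : HasSum (fun n : ℕ => ((if Odd n then x ^ n / n ! else 0) / l) • Z)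
        ((Real.sinh x / l) • Z) := (hodd.div_const l).smul_const Z
    have hC : HasSum (fun n : ℕ =>
        ((if Even n ∧ n ≠ 0 then x ^ n / n ! else 0) / l ^ 2) • Z ^ 2)
        (((Real.cosh x - 1) / l ^ 2) • Z ^ 2) := (heven.div_const (l ^ 2)).smul_const (Z ^ 2)
    convert (hA.add hB).add hC using 2 with n
    rcases eq_or_ne n 0 with rfl | hn
    · simp
    · rcases Nat.even_or_odd n with he | ho
      · obtain ⟨k, hk⟩ : ∃ k, n = 2 * k + 2 := by
          obtain ⟨m, hm⟩ := he; exact ⟨m - 1, by omega⟩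
        subst hk
        have he2 : Even (2 * k + 2) := ⟨k + 1, by ring⟩
        have hno : ¬ Odd (2 * k + 2) := Nat.not_odd_iff_even.mpr he2
        rw [if_neg (by omega : ¬ (2 * k + 2 = 0)), if_neg hno, if_pos ⟨he2, by omega⟩,
          smul_pow, Zpow_even hZ k, smul_smul, smul_smul]
        rw [zero_smul, zero_div, zero_smul, zero_add, zero_add]
        congr 1
        have hfac : ((2 * k + 2)! : ℝ) ≠ 0 := Nat.cast_ne_zero.mpr (Nat.factorial_ne_zero _)
        field_simp
        ring
      · obtain ⟨k, hk⟩ := ho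
        subst hk
        have hno : ¬ Even (2 * k + 1) := Nat.not_even_iff_odd.mpr ⟨k, rfl⟩
        rw [if_neg (by omega : ¬ (2 * k + 1 = 0)), if_pos ⟨k, rfl⟩,
          if_neg (fun h => hno h.1), smul_pow, Zpow_odd hZ k, smul_smul, smul_smul]
        rw [zero_smul, zero_add, zero_div, zero_smul, add_zero]
        congr 1
        have hfac : ((2 * k + 1)! : ℝ) ≠ 0 := Nat.cast_ne_zero.mpr (Nat.factorial_ne_zero _)
        field_simp
        ring
  exact hmat.unique hrhs
end

section
/- Let X and B be 2×2 real matrices with trace(X) = 0 and trace(B) = 0, set M = X + B, and let λ, δ be nonzero real numbers with λ² = −det(M) and δ² = −det(X). Then the curve γ(t) = (cosh(tλ)·I + (sinh(tλ)/λ)·M) · (cosh(tδ)·I − (sinh(tδ)/δ)·X) satisfies γ(0) = I and γ′(t) = X·γ(t) − γ(t)·X + B·γ(t) for all t ∈ ℝ. (This is the explicit solution φ_t(u,e) = exp(tΣ_I)·exp(−tX) of a linear control system on SL(2,ℝ), where Σ_I = M = X + Σⱼ uⱼYⱼ is the matrix of the associated right-invariant system and B = Σⱼ uⱼYⱼ.)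 -/
attribute [local instance] Matrix.linftyOpNormedRing Matrix.linftyOpNormedAlgebra

/-!
By Cayley–Hamilton a traceless `2 × 2` matrix `A` satisfies `A * A = (-det A) • 1`, so the two
factors of `γ` are `exp (t M)` and `exp (-t X)`. Hence the first solves `F' = M F`, the second
solves `G' = -X G` and commutes with `X`, and the product rule gives
`γ' = M γ - γ X = X γ - γ X + B γ`.
-/

theorem Matrix.mul_self_eq_neg_det_smul_one_of_trace_eq_zero {R : Type*} [CommRing R]
    [Nontrivial R] (A : Matrix (Fin 2) (Fin 2) R) (hA : A.trace = 0) :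
    A * A = (-A.det) • 1 := by
  have h := A.aeval_self_charpoly
  rw [A.charpoly_fin_two, hA] at h
  simp only [sq, map_zero, zero_mul, sub_zero, map_add, map_mul, Polynomial.aeval_X,
    Polynomial.aeval_C, Algebra.algebraMap_eq_smul_one] at h
  rw [neg_smul]
  exact eq_neg_of_add_eq_zero_left h

section CoshSinhCurve

variable {𝔸 : Type*} [NormedRing 𝔸] [NormedAlgebra ℝ 𝔸]

/-- When `A * A = l ^ 2 • 1` and `l ≠ 0`, this is `exp (t • A)`. -/
noncomputable def coshSinhCurve (l : ℝ) (A : 𝔸) (t : ℝ) : 𝔸 :=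
  Real.cosh (t * l) • 1 + (Real.sinh (t * l) / l) • A

theorem coshSinhCurve_zero (l : ℝ) (A : 𝔸) : coshSinhCurve l A 0 = 1 := by
  simp [coshSinhCurve]

theorem commute_coshSinhCurve (l : ℝ) (A : 𝔸) (t : ℝ) : Commute A (coshSinhCurve l A t) :=
  ((Commute.one_right A).smul_right _).add_right ((Commute.refl A).smul_right _)

theorem hasDerivAt_coshSinhCurve {l : ℝ} {A : 𝔸} (hl : l ≠ 0) (hA : A * A = l ^ 2 • 1)
    (t : ℝ) : HasDerivAt (coshSinhCurve l A) (A * coshSinhCurve l A t) t := by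
  have hcosh : HasDerivAt (fun s => Real.cosh (s * l)) (Real.sinh (t * l) * l) t :=
    (Real.hasDerivAt_cosh _).comp t (hasDerivAt_mul_const l)
  have hsinh : HasDerivAt (fun s => Real.sinh (s * l) / l) (Real.cosh (t * l)) t := by
    have h := ((Real.hasDerivAt_sinh _).comp t (hasDerivAt_mul_const l)).div_const l
    rwa [mul_div_cancel_right₀ _ hl] at h
  refine ((hcosh.smul_const (1 : 𝔸)).add (hsinh.smul_const A)).congr_deriv ?_
  rw [coshSinhCurve, mul_add, mul_smul_comm, mul_one, mul_smul_comm, hA, smul_smul, add_comm]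
  congr 2
  field_simp

end CoshSinhCurve

/-- Explicit solution of a linear control system on `SL(2,ℝ)` with inner derivation `ad X`
and constant control: the curve
`γ(t) = (cosh(tλ)·I + (sinh(tλ)/λ)·M) * (cosh(tδ)·I - (sinh(tδ)/δ)·X)`, with `M = X + B`,
`λ² = -det M` and `δ² = -det X`, satisfies `γ(0) = I` and `γ' = Xγ - γX + Bγ`. -/
theorem sl2_linear_control_solution
    (X B M : Matrix (Fin 2) (Fin 2) ℝ) (hX : X.trace = 0) (hB : B.trace = 0)
    (hM : M = X + B)
    (l d : ℝ) (hl : l ≠ 0) (hd : d ≠ 0) (hl2 : l ^ 2 = -M.det) (hd2 : d ^ 2 = -X.det)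
    (γ : ℝ → Matrix (Fin 2) (Fin 2) ℝ)
    (hγ : ∀ t : ℝ, γ t =
      (Real.cosh (t * l) • (1 : Matrix (Fin 2) (Fin 2) ℝ) + (Real.sinh (t * l) / l) • M) *
        (Real.cosh (t * d) • (1 : Matrix (Fin 2) (Fin 2) ℝ) - (Real.sinh (t * d) / d) • X)) :
    γ 0 = 1 ∧ ∀ t : ℝ, HasDerivAt γ (X * γ t - γ t * X + B * γ t) t := by
  have hγ' : γ = fun t => coshSinhCurve l M t * coshSinhCurve d (-X) t := by
    ext1 t
    rw [hγ t, coshSinhCurve, coshSinhCurve, smul_neg, sub_eq_add_neg]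
  have hMtr : M.trace = 0 := by rw [hM, Matrix.trace_add, hX, hB, add_zero]
  have hM2 : M * M = l ^ 2 • 1 := by
    rw [hl2]
    exact M.mul_self_eq_neg_det_smul_one_of_trace_eq_zero hMtr
  have hX2 : -X * -X = d ^ 2 • 1 := by
    rw [neg_mul_neg, hd2]
    exact X.mul_self_eq_neg_det_smul_one_of_trace_eq_zero hX
  subst hγ'
  refine ⟨by simp only [coshSinhCurve_zero, mul_one], fun t => ?_⟩
  have hXG := (Commute.neg_left_iff.mp (commute_coshSinhCurve d (-X) t)).eq
  refine ((hasDerivAt_coshSinhCurve hl hM2 t).mul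
    (hasDerivAt_coshSinhCurve hd hX2 t)).congr_deriv ?_
  rw [neg_mul, hXG, hM]
  noncomm_ring
end

section
/- Let X and B be 3×3 real matrices, set M = X + B, and let λ, δ be nonzero real numbers with M³ = λ²·M and X³ = δ²·X. Then the curve γ(t) = (I + (sinh(tλ)/λ)·M + ((cosh(tλ) − 1)/λ²)·M²) · (I − (sinh(tδ)/δ)·X + ((cosh(tδ) − 1)/δ²)·X²) satisfies γ(0) = I and γ′(t) = X·γ(t) − γ(t)·X + B·γ(t) for all t ∈ ℝ. (This is the explicit solution φ_t(u,e) = exp(tΣ_I)·exp(−tX) of a linear control system on SO(2,1)₀, where Σ_I = M = X + Σⱼ uⱼYⱼ and B = Σⱼ uⱼYⱼ.) -/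
attribute [local instance] Matrix.linftyOpNormedRing Matrix.linftyOpNormedAlgebra

/-- Explicit solution of a linear control system on `SO(2,1)₀` with inner derivation `ad X`
and constant control: the curve
`γ(t) = (I + (sinh(tλ)/λ)·M + ((cosh(tλ)-1)/λ²)·M²) * (I - (sinh(tδ)/δ)·X + ((cosh(tδ)-1)/δ²)·X²)`,
with `M = X + B`, `M³ = λ²·M` and `X³ = δ²·X`, satisfies `γ(0) = I` and `γ' = Xγ - γX + Bγ`. -/
theorem so21_linear_control_solution
    (X B M : Matrix (Fin 3) (Fin 3) ℝ) (hM : M = X + B)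
    (l d : ℝ) (hl : l ≠ 0) (hd : d ≠ 0)
    (hM3 : M ^ 3 = l ^ 2 • M) (hX3 : X ^ 3 = d ^ 2 • X)
    (γ : ℝ → Matrix (Fin 3) (Fin 3) ℝ)
    (hγ : ∀ t : ℝ, γ t =
      ((1 : Matrix (Fin 3) (Fin 3) ℝ) + (Real.sinh (t * l) / l) • M +
          ((Real.cosh (t * l) - 1) / l ^ 2) • M ^ 2) *
        ((1 : Matrix (Fin 3) (Fin 3) ℝ) - (Real.sinh (t * d) / d) • X +
          ((Real.cosh (t * d) - 1) / d ^ 2) • X ^ 2)) :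
    γ 0 = 1 ∧ ∀ t : ℝ, HasDerivAt γ (X * γ t - γ t * X + B * γ t) t := by
  set f : ℝ → Matrix (Fin 3) (Fin 3) ℝ := fun t =>
    (1 : Matrix (Fin 3) (Fin 3) ℝ) + (Real.sinh (t * l) / l) • M +
      ((Real.cosh (t * l) - 1) / l ^ 2) • M ^ 2 with hf_def
  set g : ℝ → Matrix (Fin 3) (Fin 3) ℝ := fun t =>
    (1 : Matrix (Fin 3) (Fin 3) ℝ) - (Real.sinh (t * d) / d) • X +
      ((Real.cosh (t * d) - 1) / d ^ 2) • X ^ 2 with hg_def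
  have hγfg : γ = fun t => f t * g t := by funext t; exact hγ t
  constructor
  · rw [hγ 0]
    simp
  · intro t
    -- derivative of scalar pieces
    have hs1 : HasDerivAt (fun t : ℝ => Real.sinh (t * l) / l) (Real.cosh (t * l)) t := by
      have := ((Real.hasDerivAt_sinh (t * l)).comp t ((hasDerivAt_id t).mul_const l)).div_const l
      simpa [mul_div_assoc, mul_div_cancel_right₀ _ hl] using this
    have hc1 : HasDerivAt (fun t : ℝ => (Real.cosh (t * l) - 1) / l ^ 2)
        (Real.sinh (t * l) / l) t := by
      have := (((Real.hasDerivAt_cosh (t * l)).comp t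
        ((hasDerivAt_id t).mul_const l)).sub_const 1).div_const (l ^ 2)
      refine this.congr_deriv ?_
      field_simp
    have hs2 : HasDerivAt (fun t : ℝ => Real.sinh (t * d) / d) (Real.cosh (t * d)) t := by
      have := ((Real.hasDerivAt_sinh (t * d)).comp t ((hasDerivAt_id t).mul_const d)).div_const d
      simpa [mul_div_assoc, mul_div_cancel_right₀ _ hd] using this
    have hc2 : HasDerivAt (fun t : ℝ => (Real.cosh (t * d) - 1) / d ^ 2)
        (Real.sinh (t * d) / d) t := by
      have := (((Real.hasDerivAt_cosh (t * d)).comp t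
        ((hasDerivAt_id t).mul_const d)).sub_const 1).div_const (d ^ 2)
      refine this.congr_deriv ?_
      field_simp
    have hf : HasDerivAt f (Real.cosh (t * l) • M + (Real.sinh (t * l) / l) • M ^ 2) t := by
      have := ((hasDerivAt_const t (1 : Matrix (Fin 3) (Fin 3) ℝ)).add
        (hs1.smul_const M)).add (hc1.smul_const (M ^ 2))
      exact this.congr_deriv (by simp)
    have hg : HasDerivAt g (-(Real.cosh (t * d) • X) + (Real.sinh (t * d) / d) • X ^ 2) t := by
      have := ((hasDerivAt_const t (1 : Matrix (Fin 3) (Fin 3) ℝ)).sub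
        (hs2.smul_const X)).add (hc2.smul_const (X ^ 2))
      exact this.congr_deriv (by simp)
    have hfM : Real.cosh (t * l) • M + (Real.sinh (t * l) / l) • M ^ 2 = M * f t := by
      have h3 : M * M ^ 2 = l ^ 2 • M := by
        rw [← pow_succ']; exact hM3
      simp only [hf_def, mul_add, mul_one, Matrix.mul_smul, ← pow_two, h3, smul_smul,
        div_mul_cancel₀ _ (pow_ne_zero 2 hl)]
      module
    have hgX : -(Real.cosh (t * d) • X) + (Real.sinh (t * d) / d) • X ^ 2 = -(g t * X) := by
      have h3 : X ^ 2 * X = d ^ 2 • X := by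
        rw [← pow_succ]; exact hX3
      simp only [hg_def, add_mul, sub_mul, one_mul, Matrix.smul_mul, ← pow_two, h3,
        smul_smul, div_mul_cancel₀ _ (pow_ne_zero 2 hd)]
      module
    have key : HasDerivAt γ (M * γ t - γ t * X) t := by
      rw [hγfg]
      have := hf.mul hg
      refine this.congr_deriv ?_
      rw [hfM, hgX]
      simp [mul_assoc, mul_neg]
      abel
    have : X * γ t - γ t * X + B * γ t = M * γ t - γ t * X := by
      rw [hM]; noncomm_ring
    rw [this]
    exact key
end
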